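/- For a surjective MDP homomorphism (l, k) between finite MDPs, the optimal values agree: V*(s) = V̄*(l(s)) and Q*(s,a) = Q̄*(l(s), k(a)) for all s, a. -/

import Mathlib

/-!
Both Bellman operators of an MDP are γ-contractions for the sup norm, since a finite supremum
and an expectation under a stochastic kernel are both 1-Lipschitz; so each has exactly one fixed
point. The homomorphism conditions say precisely that pulling a value function of the image MDP
back along `l` (and `k`) commutes with the Bellman operators, so the pull-backs of `V̄*` and `Q̄*`
are fixed points of the Bellman operators of the original MDP, hence equal `V*` and `Q*`.
-/

open scoped Classical

open Finset

lemma Finset.sum_fiber_sum_mul {X Y : Type*} [Fintype X] [Fintype Y]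
    (f : X → Y) (w : X → ℝ) (h : Y → ℝ) :
    ∑ y, (∑ x ∈ univ.filter (fun x => f x = y), w x) * h y = ∑ x, w x * h (f x) := by
  rw [← sum_fiberwise univ f (fun x => w x * h (f x))]
  refine sum_congr rfl fun y _ => ?_
  rw [sum_mul]
  exact sum_congr rfl fun x hx => by rw [(mem_filter.mp hx).2]

lemma Real.dist_ciSup_le {ι : Type*} [Fintype ι] [Nonempty ι] (f g : ι → ℝ) :
    dist (⨆ i, f i) (⨆ i, g i) ≤ dist f g := by
  have bound : ∀ f g : ι → ℝ, ⨆ i, f i ≤ (⨆ i, g i) + dist f g := fun f g =>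
    ciSup_le fun i => by
      have hi := (abs_sub_le_iff.mp (dist_le_pi_dist f g i)).1
      have hg := le_ciSup (Finite.bddAbove_range g) i
      linarith
  rw [Real.dist_eq, abs_sub_le_iff]
  constructor
  · linarith [bound f g]
  · linarith [bound g f, dist_comm f g]

lemma dist_sum_mul_le_of_stochastic {S : Type*} [Fintype S] (p : S → ℝ) (hp : ∀ s, 0 ≤ p s)
    (hp1 : ∑ s, p s = 1) (v w : S → ℝ) :
    dist (∑ s, p s * v s) (∑ s, p s * w s) ≤ dist v w :=
  calc dist (∑ s, p s * v s) (∑ s, p s * w s) = |∑ s, p s * (v s - w s)| := by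
        simp only [Real.dist_eq, mul_sub, sum_sub_distrib]
    _ ≤ ∑ s, p s * |v s - w s| := by
        refine (abs_sum_le_sum_abs _ _).trans (le_of_eq (sum_congr rfl fun s _ => ?_))
        rw [abs_mul, abs_of_nonneg (hp s)]
    _ ≤ ∑ s, p s * dist v w :=
        sum_le_sum fun s _ => mul_le_mul_of_nonneg_left (dist_le_pi_dist v w s) (hp s)
    _ = dist v w := by rw [← sum_mul, hp1, one_mul]

section Bellman

variable {S A : Type*} [Fintype S] (P : S → A → S → ℝ) (r : S → A → ℝ) (γ : ℝ)

noncomputable def bellmanV (v : S → ℝ) (s : S) : ℝ :=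
  ⨆ a, (r s a + γ * ∑ s', P s a s' * v s')

noncomputable def bellmanQ (q : S → A → ℝ) (s : S) (a : A) : ℝ :=
  r s a + γ * ∑ s', P s a s' * ⨆ a', q s' a'

variable [Fintype A] [Nonempty A] {P} {γ}

lemma contractingWith_bellmanV (hγ0 : 0 ≤ γ) (hγ1 : γ < 1) (hP : ∀ s a s', 0 ≤ P s a s')
    (hP1 : ∀ s a, ∑ s', P s a s' = 1) : ContractingWith ⟨γ, hγ0⟩ (bellmanV P r γ) := by
  refine ⟨hγ1, LipschitzWith.of_dist_le_mul fun v w => ?_⟩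
  refine (dist_pi_le_iff (by positivity)).2 fun s => (Real.dist_ciSup_le _ _).trans ?_
  refine (dist_pi_le_iff (by positivity)).2 fun a => ?_
  rw [dist_add_left, Real.dist_eq, ← mul_sub, abs_mul, abs_of_nonneg hγ0, ← Real.dist_eq]
  exact mul_le_mul_of_nonneg_left (dist_sum_mul_le_of_stochastic _ (hP s a) (hP1 s a) v w) hγ0

lemma contractingWith_bellmanQ (hγ0 : 0 ≤ γ) (hγ1 : γ < 1) (hP : ∀ s a s', 0 ≤ P s a s')
    (hP1 : ∀ s a, ∑ s', P s a s' = 1) : ContractingWith ⟨γ, hγ0⟩ (bellmanQ P r γ) := by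
  refine ⟨hγ1, LipschitzWith.of_dist_le_mul fun q q' => ?_⟩
  refine (dist_pi_le_iff (by positivity)).2 fun s =>
    (dist_pi_le_iff (by positivity)).2 fun a => ?_
  rw [bellmanQ, bellmanQ, dist_add_left, Real.dist_eq, ← mul_sub, abs_mul, abs_of_nonneg hγ0,
    ← Real.dist_eq]
  have hsup : dist (fun s' => ⨆ a', q s' a') (fun s' => ⨆ a', q' s' a') ≤ dist q q' :=
    (dist_pi_le_iff dist_nonneg).2 fun s' =>
      (Real.dist_ciSup_le _ _).trans (dist_le_pi_dist q q' s')
  exact mul_le_mul_of_nonneg_left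
    ((dist_sum_mul_le_of_stochastic _ (hP s a) (hP1 s a) _ _).trans hsup) hγ0

end Bellman

section Homomorphism

variable {S A Sb Ab : Type*} [Fintype S] [Fintype Sb]
    {P : S → A → S → ℝ} {r : S → A → ℝ} {Pb : Sb → Ab → Sb → ℝ} {rb : Sb → Ab → ℝ} {γ : ℝ}
    {l : S → Sb} {k : A → Ab}

lemma sum_mul_comp_eq_of_block_transition
    (hPh : ∀ s a sb',
      ∑ s' ∈ univ.filter (fun s' => l s' = sb'), P s a s' = Pb (l s) (k a) sb')
    (s : S) (a : A) (h : Sb → ℝ) :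
    ∑ sb', Pb (l s) (k a) sb' * h sb' = ∑ s', P s a s' * h (l s') := by
  simp only [← hPh]
  exact sum_fiber_sum_mul l _ h

lemma bellmanV_comp (hk : Function.Surjective k) (hr : ∀ s a, r s a = rb (l s) (k a))
    (hPh : ∀ s a sb',
      ∑ s' ∈ univ.filter (fun s' => l s' = sb'), P s a s' = Pb (l s) (k a) sb')
    (vb : Sb → ℝ) : bellmanV P r γ (vb ∘ l) = bellmanV Pb rb γ vb ∘ l := by
  ext s
  simp only [bellmanV, Function.comp_apply, ← hk.iSup_comp, hr,
    sum_mul_comp_eq_of_block_transition hPh]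

lemma bellmanQ_comp (hk : Function.Surjective k) (hr : ∀ s a, r s a = rb (l s) (k a))
    (hPh : ∀ s a sb',
      ∑ s' ∈ univ.filter (fun s' => l s' = sb'), P s a s' = Pb (l s) (k a) sb')
    (qb : Sb → Ab → ℝ) :
    bellmanQ P r γ (fun s a => qb (l s) (k a)) =
      fun s a => bellmanQ Pb rb γ qb (l s) (k a) := by
  ext s a
  simp only [bellmanQ, hr, sum_mul_comp_eq_of_block_transition hPh, hk.iSup_comp]

end Homomorphism

theorem stmt_10_general {S A Sb Ab : Type*} [Fintype S] [Fintype A] [Nonempty A]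
    [Fintype Sb]
    (P : S → A → S → ℝ) (r : S → A → ℝ)
    (Pb : Sb → Ab → Sb → ℝ) (rb : Sb → Ab → ℝ) (γ : ℝ)
    (hγ0 : 0 ≤ γ) (hγ1 : γ < 1)
    (hPnn : ∀ s a s', 0 ≤ P s a s') (hPsum : ∀ s a, ∑ s', P s a s' = 1)
    (l : S → Sb) (k : A → Ab)
    (hk : Function.Surjective k)
    (hr : ∀ s a, r s a = rb (l s) (k a))
    (hPh : ∀ (s : S) (a : A) (sb' : Sb),
      ∑ s' ∈ Finset.univ.filter (fun s' => l s' = sb'), P s a s' = Pb (l s) (k a) sb')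
    (V : S → ℝ) (Q : S → A → ℝ) (Vb : Sb → ℝ) (Qb : Sb → Ab → ℝ)
    (hV : ∀ s, V s = ⨆ a : A, (r s a + γ * ∑ s', P s a s' * V s'))
    (hQ : ∀ s a, Q s a = r s a + γ * ∑ s', P s a s' * (⨆ a' : A, Q s' a'))
    (hVb : ∀ sb, Vb sb = ⨆ ab : Ab, (rb sb ab + γ * ∑ sb', Pb sb ab sb' * Vb sb'))
    (hQb : ∀ sb ab, Qb sb ab = rb sb ab + γ * ∑ sb', Pb sb ab sb' * (⨆ ab' : Ab, Qb sb' ab'))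
    (s : S) (a : A) : V s = Vb (l s) ∧ Q s a = Qb (l s) (k a) := by
  have hVb' : bellmanV Pb rb γ Vb = Vb := (funext hVb).symm
  have hQb' : bellmanQ Pb rb γ Qb = Qb := (funext₂ hQb).symm
  have hVeq : V = Vb ∘ l :=
    (contractingWith_bellmanV r hγ0 hγ1 hPnn hPsum).fixedPoint_unique' (funext hV).symm
      (by rw [Function.IsFixedPt, bellmanV_comp hk hr hPh, hVb'])
  have hQeq : Q = fun s a => Qb (l s) (k a) :=
    (contractingWith_bellmanQ r hγ0 hγ1 hPnn hPsum).fixedPoint_unique' (funext₂ hQ).symm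
      (by rw [Function.IsFixedPt, bellmanQ_comp hk hr hPh, hQb'])
  exact ⟨congrFun hVeq s, congrFun₂ hQeq s a⟩

theorem stmt_10 {S A Sb Ab : Type*} [Fintype S] [Fintype A] [Nonempty A]
    [Fintype Sb] [Fintype Ab] [Nonempty Ab]
    (P : S → A → S → ℝ) (r : S → A → ℝ)
    (Pb : Sb → Ab → Sb → ℝ) (rb : Sb → Ab → ℝ) (γ : ℝ)
    (hγ0 : 0 ≤ γ) (hγ1 : γ < 1)
    (hPnn : ∀ s a s', 0 ≤ P s a s') (hPsum : ∀ s a, ∑ s', P s a s' = 1)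
    (hPbnn : ∀ sb ab sb', 0 ≤ Pb sb ab sb') (hPbsum : ∀ sb ab, ∑ sb', Pb sb ab sb' = 1)
    (l : S → Sb) (k : A → Ab)
    (hl : Function.Surjective l) (hk : Function.Surjective k)
    (hr : ∀ s a, r s a = rb (l s) (k a))
    (hPh : ∀ (s : S) (a : A) (sb' : Sb),
      ∑ s' ∈ Finset.univ.filter (fun s' => l s' = sb'), P s a s' = Pb (l s) (k a) sb')
    (V : S → ℝ) (Q : S → A → ℝ) (Vb : Sb → ℝ) (Qb : Sb → Ab → ℝ)
    (hV : ∀ s, V s = ⨆ a : A, (r s a + γ * ∑ s', P s a s' * V s'))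
    (hQ : ∀ s a, Q s a = r s a + γ * ∑ s', P s a s' * (⨆ a' : A, Q s' a'))
    (hVb : ∀ sb, Vb sb = ⨆ ab : Ab, (rb sb ab + γ * ∑ sb', Pb sb ab sb' * Vb sb'))
    (hQb : ∀ sb ab, Qb sb ab = rb sb ab + γ * ∑ sb', Pb sb ab sb' * (⨆ ab' : Ab, Qb sb' ab'))
    (s : S) (a : A) : V s = Vb (l s) ∧ Q s a = Qb (l s) (k a) :=
  stmt_10_general P r Pb rb γ hγ0 hγ1 hPnn hPsum l k hk hr hPh V Q Vb Qb hV hQ hVb hQb s a
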